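/- arXiv:1208.5172 — 2 statements merged into one kernel-verified Lean document; each statement's English description precedes it below -/
import Mathlib

section
/- Assume (Reg) and (Twist). Fix indices 1 ≤ i ≤ K and j ≠ i, and fix positive values d_k for all k ≠ i. Then the function dᵢ ↦ G^i(d₁,…,dᵢ,…,d_K) is nonincreasing in dᵢ > 0, and the function dᵢ ↦ G^j(d₁,…,dᵢ,…,d_K) is nondecreasing in dᵢ > 0. -/
open MeasureTheory Set Filter Topology Function
open scoped RealInnerProductSpace ENNReal NNReal Classical

noncomputable section

/-- `d`-dimensional Euclidean space. -/
abbrev Euc (d : ℕ) : Type := EuclideanSpace ℝ (Fin d)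

/-- Gradient of the cost in the first variable: Dc(x,x̄). -/
def Dc {d : ℕ} (c : Euc d → Euc d → ℝ) (x y : Euc d) : Euc d :=
  gradient (fun x' => c x' y) x

/-- Gradient of the cost in the second variable: D̄c(x,x̄). -/
def Dbc {d : ℕ} (c : Euc d → Euc d → ℝ) (x y : Euc d) : Euc d :=
  gradient (fun y' => c x y') y

/-- (Reg): the cost is C⁴ on cl(Ω) × cl(Ω̄). -/
def Reg {d : ℕ} (c : Euc d → Euc d → ℝ) (Om Omb : Set (Euc d)) : Prop :=
  ContDiffOn ℝ 4 (fun p : Euc d × Euc d => c p.1 p.2) (closure Om ×ˢ closure Omb)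

/-- (Twist): x̄ ↦ −Dc(x₀,x̄) is injective on cl(Ω̄) and x ↦ −D̄c(x,x̄₀) is injective on cl(Ω). -/
def Twist {d : ℕ} (c : Euc d → Euc d → ℝ) (Om Omb : Set (Euc d)) : Prop :=
  (∀ x₀ ∈ closure Om, Set.InjOn (fun y => -Dc c x₀ y) (closure Omb)) ∧
  (∀ y₀ ∈ closure Omb, Set.InjOn (fun x => -Dbc c x y₀) (closure Om))

/-- Partial derivative in the i-th coordinate of the first variable. -/
def pd1 {d : ℕ} (c : Euc d → Euc d → ℝ) (i : Fin d) : Euc d → Euc d → ℝ :=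
  fun x y => fderiv ℝ (fun x' => c x' y) x (EuclideanSpace.single i 1)

/-- Partial derivative in the j-th coordinate of the second variable. -/
def pd2 {d : ℕ} (c : Euc d → Euc d → ℝ) (j : Fin d) : Euc d → Euc d → ℝ :=
  fun x y => fderiv ℝ (fun y' => c x y') y (EuclideanSpace.single j 1)

/-- The matrix −∂²c/∂xⁱ∂x̄ʲ (i.e. −DD̄c). -/
def negMixed {d : ℕ} (c : Euc d → Euc d → ℝ) (x y : Euc d) : Matrix (Fin d) (Fin d) ℝ :=
  Matrix.of fun i j => -(pd1 (pd2 c j) i x y)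

/-- The mixed Hessian c_{r,s̄}. -/
def mixedHess {d : ℕ} (c : Euc d → Euc d → ℝ) (x y : Euc d) : Matrix (Fin d) (Fin d) ℝ :=
  Matrix.of fun r s => pd2 (pd1 c r) s x y

/-- (Nondeg): the mixed second-derivative matrix is invertible on cl(Ω) × cl(Ω̄). -/
def Nondeg {d : ℕ} (c : Euc d → Euc d → ℝ) (Om Omb : Set (Euc d)) : Prop :=
  ∀ x ∈ closure Om, ∀ y ∈ closure Omb, (negMixed c x y).det ≠ 0

/-- (MTW₊): the strong Ma–Trudinger–Wang condition. -/
def MTWplus {d : ℕ} (c : Euc d → Euc d → ℝ) (Om Omb : Set (Euc d)) : Prop :=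
  ∃ δ₀ > (0:ℝ), ∀ x ∈ closure Om, ∀ y ∈ closure Omb, ∀ V η : Euc d,
    (inner ℝ η V : ℝ) = 0 →
      δ₀ * ‖V‖ ^ 2 * ‖η‖ ^ 2 ≤
        ∑ i, ∑ j, ∑ k, ∑ l,
          (-(pd1 (pd1 (pd2 (pd1 c i) j) l) k x y) +
              ∑ r, ∑ s,
                pd2 (pd2 (pd1 c i) j) s x y * (mixedHess c x y)⁻¹ s r *
                  pd1 (pd1 (pd1 c r) l) k x y) *
            V i * V j * η k * η l

/-- c-convexity: Ω is c-convex w.r.t. every x̄ᵢ, and Ω̄ is c-convex w.r.t. every x ∈ Ω. -/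
def CConvexAssumptions {d K : ℕ} (c : Euc d → Euc d → ℝ) (Om Omb : Set (Euc d))
    (xb : Fin K → Euc d) : Prop :=
  (∀ i, Convex ℝ ((fun x => -Dbc c x (xb i)) '' Om)) ∧
  (∀ x ∈ Om, Convex ℝ ((fun y => -Dc c x y) '' Omb))

/-- The measure μ = I · (Lebesgue restricted to Ω). -/
def muM {d : ℕ} (Om : Set (Euc d)) (I : Euc d → ℝ) : Measure (Euc d) :=
  (volume.restrict Om).withDensity fun x => ENNReal.ofReal (I x)

/-- φ_d(x) = max_i (−c(x,x̄ᵢ) − log dᵢ). -/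
def phiF {d K : ℕ} (c : Euc d → Euc d → ℝ) (xb : Fin K → Euc d) (dd : Fin K → ℝ)
    (x : Euc d) : ℝ :=
  ⨆ i, (-(c x (xb i)) - Real.log (dd i))

/-- V_{d,i}. -/
def Vset {d K : ℕ} (c : Euc d → Euc d → ℝ) (Om : Set (Euc d)) (xb : Fin K → Euc d)
    (dd : Fin K → ℝ) (i : Fin K) : Set (Euc d) :=
  {x ∈ Om | ∀ k, -(c x (xb k)) - Real.log (dd k) ≤ -(c x (xb i)) - Real.log (dd i)}

/-- The visibility set vis_d(x̄ᵢ). -/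
def vis {d K : ℕ} (c : Euc d → Euc d → ℝ) (Om : Set (Euc d)) (xb : Fin K → Euc d)
    (dd : Fin K → ℝ) (i : Fin K) : Set (Euc d) :=
  {x ∈ Om | ∃ lam : ℝ, phiF c xb dd x = -(c x (xb i)) + lam ∧
      ∀ x' ∈ Om, -(c x' (xb i)) + lam ≤ phiF c xb dd x'}

/-- G^i(d) = μ(vis_d(x̄ᵢ)). -/
def G {d K : ℕ} (c : Euc d → Euc d → ℝ) (Om : Set (Euc d)) (I : Euc d → ℝ)
    (xb : Fin K → Euc d) (dd : Fin K → ℝ) (i : Fin K) : ℝ :=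
  (muM Om I (vis c Om xb dd i)).toReal

/-- W_{i,j,d}. -/
def Wset {d K : ℕ} (c : Euc d → Euc d → ℝ) (Om : Set (Euc d)) (xb : Fin K → Euc d)
    (dd : Fin K → ℝ) (i j : Fin K) : Set (Euc d) :=
  {x ∈ Om | -(c x (xb j)) - Real.log (dd j) ≤ -(c x (xb i)) - Real.log (dd i)}

/-- The c-exponential map at y: the inverse on Ω of x ↦ −D̄c(x,y). -/
def cexp {d : ℕ} (c : Euc d → Euc d → ℝ) (Om : Set (Euc d)) (y : Euc d) :
    Euc d → Euc d :=
  Function.invFunOn (fun x => -Dbc c x y) Om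

/-- c̃_{k,i}(p) = c(Xᵢ(p), x̄_k) − c(Xᵢ(p), x̄ᵢ). -/
def ctilde {d : ℕ} (c : Euc d → Euc d → ℝ) (Om : Set (Euc d)) (yk yi : Euc d)
    (p : Euc d) : ℝ :=
  c (cexp c Om yi p) yk - c (cexp c Om yi p) yi

/-- The set U_{k,d,Δd}. -/
def Uset {d K : ℕ} (c : Euc d → Euc d → ℝ) (Om : Set (Euc d)) (xb : Fin K → Euc d)
    (dd Δ : Fin K → ℝ) (i k : Fin K) : Set (Euc d) :=
  if 0 ≤ Δ k then
    {p ∈ (fun x => -Dbc c x (xb i)) '' Om |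
        -(ctilde c Om (xb k) (xb i) p) = Real.log (dd k) - Real.log (dd i)} ∩
      ((fun x => -Dbc c x (xb i)) '' ⋂ (l) (_ : l ≠ k), Wset c Om xb (dd + Δ) i l)
  else
    {p ∈ (fun x => -Dbc c x (xb i)) '' Om |
        -(ctilde c Om (xb k) (xb i) p) = Real.log (dd k + Δ k) - Real.log (dd i)} ∩
      ((fun x => -Dbc c x (xb i)) '' ⋂ (l) (_ : l ≠ k), Wset c Om xb dd i l)

/-- β_{i,k,Δd}. -/
def betaI {d K : ℕ} (c : Euc d → Euc d → ℝ) (Om : Set (Euc d)) (I : Euc d → ℝ)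
    (xb : Fin K → Euc d) (dd Δ : Fin K → ℝ) (i k : Fin K) : ℝ :=
  ∫ p in Uset c Om xb dd Δ i k,
    I (cexp c Om (xb i) p) * ‖gradient (ctilde c Om (xb k) (xb i)) p‖⁻¹ *
      |(fderiv ℝ (cexp c Om (xb i)) p).det| ∂(μH[(d : ℝ) - 1])

/-- The constant C of the paper. -/
def Cconst {d K : ℕ} (c : Euc d → Euc d → ℝ) (Om : Set (Euc d)) (xb : Fin K → Euc d) : ℝ :=
  sSup {r : ℝ | ∃ k l : Fin K, k ≠ l ∧ ∃ x ∈ Om,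
    r = |(negMixed c x (xb l)).det| /
        ‖(EuclideanSpace.equiv (Fin d) ℝ).symm
            ((negMixed c x (xb l))⁻¹.mulVec
              fun m => (-(Dc c x (xb l)) + Dc c x (xb k)) m)‖}

/-- T(x) = x̄ᵢ for the least index i with x ∈ V_{d,i} (junk value 0 otherwise). -/
def Tmap {d K : ℕ} (c : Euc d → Euc d → ℝ) (Om : Set (Euc d)) (xb : Fin K → Euc d)
    (dd : Fin K → ℝ) (x : Euc d) : Euc d :=
  match Fin.find? (fun i => decide (x ∈ Vset c Om xb dd i)) with
  | some i => xb i
  | none => 0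

/-! ### Auxiliary lemmas -/

/-- A level set of a function with everywhere nonvanishing derivative is Lebesgue-null. -/
lemma levelset_null {d : ℕ} (f : Euc d → ℝ) (a : ℝ) (s : Set (Euc d))
    (hconst : ∀ x ∈ s, f x = a)
    (hdiff : ∀ x ∈ s, DifferentiableAt ℝ f x)
    (hne : ∀ x ∈ s, fderiv ℝ f x ≠ 0) : volume s = 0 := by
  classical
  have hv : ∀ x : Euc d, x ∈ s → ∃ v, fderiv ℝ f x v = 1 := by
    intro x hx
    obtain ⟨w, hw⟩ : ∃ w, fderiv ℝ f x w ≠ 0 := by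
      by_contra h
      push_neg at h
      exact hne x hx (ContinuousLinearMap.ext fun w => h w)
    exact ⟨(fderiv ℝ f x w)⁻¹ • w, by simp [inv_mul_cancel₀ hw]⟩
  set v : Euc d → Euc d :=
    fun x => if hx : x ∈ s then Classical.choose (hv x hx) else 0 with hvdef
  have hv1 : ∀ x ∈ s, fderiv ℝ f x (v x) = 1 := by
    intro x hx
    simp only [hvdef, dif_pos hx]
    exact Classical.choose_spec (hv x hx)
  set A : Euc d → (Euc d →L[ℝ] Euc d) :=
    fun x => ContinuousLinearMap.id ℝ _ - (fderiv ℝ f x).smulRight (v x) with hAdef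
  have hfd : ∀ x ∈ s, HasFDerivWithinAt id (A x) s x := by
    intro x hx
    have h1 : HasFDerivWithinAt f (fderiv ℝ f x) s x :=
      ((hdiff x hx).hasFDerivAt).hasFDerivWithinAt
    have h2 : HasFDerivWithinAt f (0 : Euc d →L[ℝ] ℝ) s x :=
      (hasFDerivWithinAt_const a x s).congr (fun y hy => hconst y hy) (hconst x hx)
    have h3 : HasFDerivWithinAt (fun y => f y - f y) (fderiv ℝ f x - 0) s x := h1.sub h2
    have h4 : HasFDerivWithinAt (fun _ : Euc d => (0:ℝ)) (fderiv ℝ f x) s x := by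
      simpa using h3
    have h5 : HasFDerivWithinAt (fun _ : Euc d => (0:ℝ) • v x)
        ((fderiv ℝ f x).smulRight (v x)) s x := h4.smul_const (v x)
    have h6 := (hasFDerivWithinAt_id x s).sub h5
    have h7 : (id - fun _ : Euc d => (0 : Euc d)) = id := by funext y; simp
    simpa [h7] using h6
  have hdet : ∀ x ∈ s, (A x).det = 0 := by
    intro x hx
    by_contra hd
    have hd' : LinearMap.det ((A x) : Euc d →ₗ[ℝ] Euc d) ≠ 0 := hd
    have hinj : Function.Injective ((A x) : Euc d →ₗ[ℝ] Euc d) := by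
      have := (LinearMap.equivOfDetNeZero _ hd').injective
      exact this
    have hker : (A x) (v x) = 0 := by
      simp [hAdef, hv1 x hx]
    have hv0 : v x ≠ 0 := by
      intro h0
      have := hv1 x hx
      rw [h0] at this
      simp at this
    exact hv0 (by simpa [map_zero] using hinj (a₂ := 0) (by simpa using hker))
  have := MeasureTheory.addHaar_image_eq_zero_of_det_fderivWithin_eq_zero volume hfd hdet
  simpa using this

lemma diffAt_c {d : ℕ} {c : Euc d → Euc d → ℝ} {Om Omb : Set (Euc d)}
    (hReg : Reg c Om Omb) (hOmOpen : IsOpen Om) (hOmbOpen : IsOpen Omb)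
    {x y : Euc d} (hx : x ∈ Om) (hy : y ∈ Omb) :
    DifferentiableAt ℝ (fun x' => c x' y) x := by
  have hmem : closure Om ×ˢ closure Omb ∈ 𝓝 (x, y) := by
    refine Filter.mem_of_superset ((hOmOpen.prod hOmbOpen).mem_nhds ⟨hx, hy⟩) ?_
    exact Set.prod_mono subset_closure subset_closure
  have h := (hReg.contDiffAt hmem).differentiableAt (by norm_num)
  exact h.comp (f := fun x' : Euc d => (x', y)) x (differentiableAt_id.prodMk (differentiableAt_const y))

lemma fderiv_diff_ne {d : ℕ} {c : Euc d → Euc d → ℝ} {Om Omb : Set (Euc d)}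
    (hReg : Reg c Om Omb) (hTwist : Twist c Om Omb)
    (hOmOpen : IsOpen Om) (hOmbOpen : IsOpen Omb)
    {x : Euc d} (hx : x ∈ Om) {y1 y2 : Euc d} (hy1 : y1 ∈ Omb) (hy2 : y2 ∈ Omb)
    (hne : y1 ≠ y2) :
    fderiv ℝ (fun x' => c x' y1 - c x' y2) x ≠ 0 := by
  have d1 := diffAt_c hReg hOmOpen hOmbOpen hx hy1
  have d2 := diffAt_c hReg hOmOpen hOmbOpen hx hy2
  rw [fderiv_fun_sub d1 d2]
  intro h
  have hfd : fderiv ℝ (fun x' => c x' y1) x = fderiv ℝ (fun x' => c x' y2) x :=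
    sub_eq_zero.mp h
  have hg : Dc c x y1 = Dc c x y2 := by
    unfold Dc gradient
    rw [hfd]
  exact hne (hTwist.1 x (subset_closure hx) (subset_closure hy1) (subset_closure hy2)
    (by simp [hg]))

/-- The "boundary" set where two different cells meet. -/
def Nbad {d K : ℕ} (c : Euc d → Euc d → ℝ) (Om : Set (Euc d)) (xb : Fin K → Euc d)
    (dd : Fin K → ℝ) : Set (Euc d) :=
  ⋃ (k) (l) (_ : k ≠ l),
    {x ∈ Om | c x (xb l) - c x (xb k) = Real.log (dd k) - Real.log (dd l)}

lemma Nbad_null {d K : ℕ} {c : Euc d → Euc d → ℝ} {Om Omb : Set (Euc d)}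
    (hReg : Reg c Om Omb) (hTwist : Twist c Om Omb)
    (hOmOpen : IsOpen Om) (hOmbOpen : IsOpen Omb)
    {xb : Fin K → Euc d} (hxbmem : ∀ i, xb i ∈ Omb) (hxbinj : Function.Injective xb)
    (dd : Fin K → ℝ) : volume (Nbad c Om xb dd) = 0 := by
  refine measure_iUnion_null fun k => measure_iUnion_null fun l => measure_iUnion_null fun hkl => ?_
  refine levelset_null _ (Real.log (dd k) - Real.log (dd l)) _ (fun x hx => hx.2) ?_ ?_
  · intro x hx
    exact (diffAt_c hReg hOmOpen hOmbOpen hx.1 (hxbmem l)).sub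
      (diffAt_c hReg hOmOpen hOmbOpen hx.1 (hxbmem k))
  · intro x hx
    exact fderiv_diff_ne hReg hTwist hOmOpen hOmbOpen hx.1 (hxbmem l) (hxbmem k)
      (fun h => hkl (hxbinj h).symm)

lemma phiF_ge {d K : ℕ} (c : Euc d → Euc d → ℝ) (xb : Fin K → Euc d) (dd : Fin K → ℝ)
    (x : Euc d) (k : Fin K) :
    -(c x (xb k)) - Real.log (dd k) ≤ phiF c xb dd x := by
  exact le_ciSup (f := fun i => -(c x (xb i)) - Real.log (dd i))
    (Set.Finite.bddAbove (Set.finite_range _)) k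

lemma Vset_subset_vis {d K : ℕ} (hK : K ≠ 0) (c : Euc d → Euc d → ℝ) (Om : Set (Euc d))
    (xb : Fin K → Euc d) (dd : Fin K → ℝ) (m : Fin K) :
    Vset c Om xb dd m ⊆ vis c Om xb dd m := by
  haveI : Nonempty (Fin K) := ⟨⟨0, Nat.pos_of_ne_zero hK⟩⟩
  rintro x ⟨hxOm, hx⟩
  refine ⟨hxOm, -Real.log (dd m), ?_, ?_⟩
  · refine le_antisymm (ciSup_le fun k => ?_) ?_
    · have := hx k
      linarith
    · have := phiF_ge c xb dd x m
      linarith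
  · intro x' _
    have := phiF_ge c xb dd x' m
    linarith

lemma vis_subset {d K : ℕ} (hK : K ≠ 0) {c : Euc d → Euc d → ℝ} {Om Omb : Set (Euc d)}
    (hReg : Reg c Om Omb) (hTwist : Twist c Om Omb)
    (hOmOpen : IsOpen Om) (hOmbOpen : IsOpen Omb)
    {xb : Fin K → Euc d} (hxbmem : ∀ i, xb i ∈ Omb) (hxbinj : Function.Injective xb)
    (dd : Fin K → ℝ) (m : Fin K) :
    vis c Om xb dd m ⊆ Vset c Om xb dd m ∪ Nbad c Om xb dd := by
  haveI : Nonempty (Fin K) := ⟨⟨0, Nat.pos_of_ne_zero hK⟩⟩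
  rintro x ⟨hxOm, lam, heq, hsupp⟩
  by_cases hV : x ∈ Vset c Om xb dd m
  · exact Or.inl hV
  right
  set t : Fin K → Euc d → ℝ := fun k x' => -(c x' (xb k)) - Real.log (dd k) with htdef
  obtain ⟨k0, hk0⟩ : ∃ k0, ∀ k, t k x ≤ t k0 x := Finite.exists_max (fun k => t k x)
  have hphix : phiF c xb dd x = t k0 x :=
    le_antisymm (ciSup_le hk0) (phiF_ge c xb dd x k0)
  by_cases hdup : ∃ l, l ≠ k0 ∧ t l x = t k0 x
  · obtain ⟨l, hlk, hl⟩ := hdup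
    refine Set.mem_iUnion.2 ⟨l, Set.mem_iUnion.2 ⟨k0, Set.mem_iUnion.2 ⟨hlk, hxOm, ?_⟩⟩⟩
    simp only [htdef] at hl
    linarith
  exfalso
  push_neg at hdup
  have hstr : ∀ l, l ≠ k0 → t l x < t k0 x := fun l hl => lt_of_le_of_ne (hk0 l) (hdup l hl)
  have hk0m : k0 ≠ m := by
    intro h
    apply hV
    refine ⟨hxOm, fun k => ?_⟩
    have := hk0 k
    rw [h] at this
    exact this
  -- continuity of each `t l` at `x`
  have hcont : ∀ l, ContinuousAt (t l) x := by
    intro l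
    have := (diffAt_c hReg hOmOpen hOmbOpen hxOm (hxbmem l)).continuousAt
    exact (this.neg.sub continuousAt_const)
  -- eventually all terms are dominated by `t k0`
  have hev : ∀ᶠ x' in 𝓝 x, ∀ l, t l x' ≤ t k0 x' := by
    rw [Filter.eventually_all]
    intro l
    by_cases hl : l = k0
    · subst hl; exact Filter.Eventually.of_forall fun _ => le_rfl
    · exact ((hcont l).eventually_lt (hcont k0) (hstr l hl)).mono fun y hy => hy.le
  have hevOm : ∀ᶠ x' in 𝓝 x, x' ∈ Om := hOmOpen.mem_nhds hxOm
  -- `h` has a local min at `x`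
  set h : Euc d → ℝ := fun x' => c x' (xb m) - c x' (xb k0) with hhdef
  have hmin : IsLocalMin h x := by
    filter_upwards [hev, hevOm] with x' h1 h2
    have hphix' : phiF c xb dd x' = t k0 x' :=
      le_antisymm (ciSup_le h1) (phiF_ge c xb dd x' k0)
    have hs := hsupp x' h2
    rw [hphix'] at hs
    have hx0 : h x = lam + Real.log (dd k0) := by
      have h1' : phiF c xb dd x = -(c x (xb m)) + lam := heq
      rw [hphix] at h1'
      simp only [hhdef, htdef] at h1' ⊢
      linarith
    simp only [hhdef, htdef] at hs hx0 ⊢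
    linarith
  have hd1 := diffAt_c hReg hOmOpen hOmbOpen hxOm (hxbmem m)
  have hd2 := diffAt_c hReg hOmOpen hOmbOpen hxOm (hxbmem k0)
  have := hmin.fderiv_eq_zero
  exact fderiv_diff_ne hReg hTwist hOmOpen hOmbOpen hxOm (hxbmem m) (hxbmem k0)
    (fun hh => hk0m (hxbinj hh).symm) this

lemma muM_null_of_volume_null {d : ℕ} {Om : Set (Euc d)} {I : Euc d → ℝ} {s : Set (Euc d)}
    (hs : volume s = 0) : muM Om I s = 0 := by
  have h1 : (volume.restrict Om) s = 0 :=
    le_antisymm (le_trans (Measure.restrict_le_self s) hs.le) zero_le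
  exact (withDensity_absolutelyContinuous (volume.restrict Om) _) h1

lemma muM_vis_eq_Vset {d K : ℕ} (hK : K ≠ 0) {c : Euc d → Euc d → ℝ} {Om Omb : Set (Euc d)}
    (hReg : Reg c Om Omb) (hTwist : Twist c Om Omb)
    (hOmOpen : IsOpen Om) (hOmbOpen : IsOpen Omb)
    {xb : Fin K → Euc d} (hxbmem : ∀ i, xb i ∈ Omb) (hxbinj : Function.Injective xb)
    (I : Euc d → ℝ) (dd : Fin K → ℝ) (m : Fin K) :
    muM Om I (vis c Om xb dd m) = muM Om I (Vset c Om xb dd m) := by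
  refine le_antisymm ?_ (measure_mono (Vset_subset_vis hK c Om xb dd m))
  calc muM Om I (vis c Om xb dd m)
      ≤ muM Om I (Vset c Om xb dd m ∪ Nbad c Om xb dd) :=
        measure_mono (vis_subset hK hReg hTwist hOmOpen hOmbOpen hxbmem hxbinj dd m)
    _ ≤ muM Om I (Vset c Om xb dd m) + muM Om I (Nbad c Om xb dd) := measure_union_le _ _
    _ = muM Om I (Vset c Om xb dd m) := by
        rw [muM_null_of_volume_null
          (Nbad_null hReg hTwist hOmOpen hOmbOpen hxbmem hxbinj dd), add_zero]

lemma muM_ne_top {d : ℕ} {Om : Set (Euc d)} (hOmOpen : IsOpen Om)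
    (hOmBdd : Bornology.IsBounded Om) {I : Euc d → ℝ}
    (hIcont : ContinuousOn I (closure Om)) (s : Set (Euc d)) : muM Om I s ≠ ⊤ := by
  have hcomp : IsCompact (closure Om) := Metric.isCompact_of_isClosed_isBounded isClosed_closure hOmBdd.closure
  obtain ⟨M, hM⟩ := hcomp.exists_bound_of_continuousOn hIcont
  have hb : muM Om I s ≤ muM Om I Set.univ := measure_mono (Set.subset_univ s)
  refine ne_top_of_le_ne_top ?_ hb
  have : muM Om I Set.univ = ∫⁻ x, ENNReal.ofReal (I x) ∂(volume.restrict Om) := by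
    rw [muM, withDensity_apply _ MeasurableSet.univ, Measure.restrict_univ]
  rw [this]
  have hle : ∫⁻ x, ENNReal.ofReal (I x) ∂(volume.restrict Om)
      ≤ ∫⁻ _, ENNReal.ofReal M ∂(volume.restrict Om) := by
    refine lintegral_mono_ae ?_
    refine (ae_restrict_iff' hOmOpen.measurableSet).2 (Filter.Eventually.of_forall fun x hx => ?_)
    exact ENNReal.ofReal_le_ofReal
      ((le_abs_self _).trans ((Real.norm_eq_abs _) ▸ hM x (subset_closure hx)))
  refine ne_top_of_le_ne_top ?_ hle
  rw [lintegral_const, Measure.restrict_apply MeasurableSet.univ, Set.univ_inter]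
  exact (ENNReal.mul_lt_top ENNReal.ofReal_lt_top hOmBdd.measure_lt_top).ne

theorem statement3
    {d K : ℕ} (hd : 1 ≤ d) (hK : 2 ≤ K)
    (c : Euc d → Euc d → ℝ) (Om Omb : Set (Euc d))
    (hOmOpen : IsOpen Om) (hOmBdd : Bornology.IsBounded Om)
    (hOmbOpen : IsOpen Omb) (hOmbBdd : Bornology.IsBounded Omb)
    (hReg : Reg c Om Omb) (hTwist : Twist c Om Omb)
    (xb : Fin K → Euc d) (hxbmem : ∀ i, xb i ∈ Omb) (hxbinj : Function.Injective xb)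
    (I : Euc d → ℝ) (hIsmooth : ContDiffOn ℝ (⊤ : ℕ∞) I (closure Om))
    (hIpos : ∀ x ∈ closure Om, 0 < I x) (hInorm : (∫ x in Om, I x) = 1)
    (i j : Fin K) (hij : j ≠ i) (dd : Fin K → ℝ) (hdd : ∀ k, k ≠ i → 0 < dd k) :
    (∀ t₁ t₂ : ℝ, 0 < t₁ → t₁ ≤ t₂ →
        G c Om I xb (Function.update dd i t₂) i ≤ G c Om I xb (Function.update dd i t₁) i) ∧
    (∀ t₁ t₂ : ℝ, 0 < t₁ → t₁ ≤ t₂ →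
        G c Om I xb (Function.update dd i t₁) j ≤ G c Om I xb (Function.update dd i t₂) j) := by
  have hK0 : K ≠ 0 := by omega
  have hIcont := hIsmooth.continuousOn
  have hGV : ∀ (dd' : Fin K → ℝ) (m : Fin K),
      G c Om I xb dd' m = (muM Om I (Vset c Om xb dd' m)).toReal := by
    intro dd' m
    rw [G, muM_vis_eq_Vset hK0 hReg hTwist hOmOpen hOmbOpen hxbmem hxbinj I dd' m]
  have hfin : ∀ s, muM Om I s ≠ ⊤ := muM_ne_top hOmOpen hOmBdd hIcont
  constructor
  · intro t₁ t₂ ht₁ ht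
    have hlog : Real.log t₁ ≤ Real.log t₂ := Real.log_le_log ht₁ ht
    rw [hGV, hGV]
    refine ENNReal.toReal_mono (hfin _) (measure_mono ?_)
    rintro x ⟨hxOm, hx⟩
    refine ⟨hxOm, fun k => ?_⟩
    have h2 := hx k
    by_cases hk : k = i
    · subst hk
      exact le_rfl
    · rw [Function.update_of_ne hk] at h2 ⊢
      rw [Function.update_self] at h2 ⊢
      linarith
  · intro t₁ t₂ ht₁ ht
    have hlog : Real.log t₁ ≤ Real.log t₂ := Real.log_le_log ht₁ ht
    rw [hGV, hGV]
    refine ENNReal.toReal_mono (hfin _) (measure_mono ?_)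
    rintro x ⟨hxOm, hx⟩
    refine ⟨hxOm, fun k => ?_⟩
    have h2 := hx k
    rw [Function.update_of_ne hij] at h2 ⊢
    by_cases hk : k = i
    · subst hk
      rw [Function.update_self] at h2 ⊢
      linarith
    · rw [Function.update_of_ne hk] at h2 ⊢
      linarith

end
end

section
/- If A ⊆ B are bounded convex subsets of ℝ^d, then H^{d−1}(∂A) ≤ H^{d−1}(∂B), where ∂ denotes topological boundary and H^{d−1} is (d−1)-dimensional Hausdorff measure. -/
open MeasureTheory Set Filter Topology Function
open scoped RealInnerProductSpace ENNReal NNReal Classical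

noncomputable section

/-!
The nearest-point projection `π` onto the closed convex set `cl A` is `1`-Lipschitz, so it does not
increase `H^s` for any `s ≥ 0`. Every `x ∈ ∂A` has an outer normal `v ≠ 0` (a supporting hyperplane,
or a normal to the affine hull when `A` is flat), and `π` maps the whole ray `x + t v`, `t ≥ 0`, to
`x`. Since `cl B` is bounded and contains `x`, that ray meets `∂(cl B) ⊆ ∂B`, so `∂A ⊆ π(∂B)`.
-/

section

variable {E : Type*} [NormedAddCommGroup E] [InnerProductSpace ℝ E]

theorem norm_sub_le_of_inner_nonpos {K : Set E} {z₁ z₂ p q : E} (hp : p ∈ K) (hq : q ∈ K)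
    (h₁ : ∀ w ∈ K, ⟪z₁ - p, w - p⟫ ≤ 0) (h₂ : ∀ w ∈ K, ⟪z₂ - q, w - q⟫ ≤ 0) :
    ‖p - q‖ ≤ ‖z₁ - z₂‖ := by
  have key : ‖p - q‖ ^ 2 ≤ ⟪z₁ - z₂, p - q⟫ := by
    have h₁q := h₁ q hq
    have h₂p := h₂ p hp
    rw [← real_inner_self_eq_norm_sq]
    simp only [inner_sub_left, inner_sub_right, real_inner_comm] at *
    linarith
  nlinarith [real_inner_le_norm (z₁ - z₂) (p - q), norm_nonneg (p - q), norm_nonneg (z₁ - z₂)]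

theorem Convex.exists_lipschitzWith_one_proj {K : Set E} (hK : Convex ℝ K) (hne : K.Nonempty)
    (hc : IsComplete K) :
    ∃ f : E → E, LipschitzWith 1 f ∧
      ∀ z, ∀ x ∈ K, (∀ w ∈ K, ⟪z - x, w - x⟫ ≤ 0) → f z = x := by
  choose f hfK hfmin using fun z => exists_norm_eq_iInf_of_complete_convex hne hc hK z
  have hf : ∀ z, ∀ w ∈ K, ⟪z - f z, w - f z⟫ ≤ 0 := fun z =>
    (norm_eq_iInf_iff_real_inner_le_zero hK (hfK z)).mp (hfmin z)
  refine ⟨f, LipschitzWith.of_dist_le_mul fun z₁ z₂ => ?_, fun z x hx hzx => ?_⟩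
  · simpa [dist_eq_norm] using norm_sub_le_of_inner_nonpos (hfK z₁) (hfK z₂) (hf z₁) (hf z₂)
  · simpa [sub_eq_zero] using norm_sub_le_of_inner_nonpos (hfK z) hx (hf z) hzx

variable [FiniteDimensional ℝ E]

theorem Convex.exists_ne_zero_inner_nonpos_of_mem_frontier {A : Set E} (hA : Convex ℝ A) {x : E}
    (hx : x ∈ frontier A) : ∃ v : E, v ≠ 0 ∧ ∀ w ∈ closure A, ⟪v, w - x⟫ ≤ 0 := by
  rcases (interior A).eq_empty_or_nonempty with hint | hint
  · have hne : (affineSpan ℝ A : Set E).Nonempty :=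
      (nonempty_of_mem (frontier_subset_closure hx)).of_closure.mono (subset_affineSpan ℝ A)
    have hdir : (affineSpan ℝ A).direction ≠ ⊤ := fun h => by
      rw [AffineSubspace.direction_eq_top_iff_of_nonempty hne,
        ← hA.interior_nonempty_iff_affineSpan_eq_top, hint] at h
      exact not_nonempty_empty h
    obtain ⟨v, hv, hv0⟩ := Submodule.exists_mem_ne_zero_of_ne_bot
      (mt Submodule.orthogonal_eq_bot_iff.mp hdir)
    have hspan : closure A ⊆ affineSpan ℝ A :=
      (affineSpan ℝ A).closed_of_finiteDimensional.closure_subset_iff.mpr (subset_affineSpan ℝ A)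
    refine ⟨v, hv0, fun w hw => le_of_eq ?_⟩
    rw [real_inner_comm]
    exact (Submodule.mem_orthogonal _ v).mp hv _
      (AffineSubspace.vsub_mem_direction (hspan hw) (hspan (frontier_subset_closure hx)))
  · obtain ⟨f, hf0, hf⟩ := geometric_hahn_banach_of_nonempty_interior_point hA hx.2 hint
    set v := (InnerProductSpace.toDual ℝ E).symm f
    have hv : ∀ w, ⟪v, w - x⟫ = f w - f x := fun w => by
      simp [v, inner_sub_right, InnerProductSpace.toDual_symm_apply]
    refine ⟨v, by simpa [v] using hf0, fun w hw => ?_⟩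
    have hcl : closure A ⊆ {w | f w ≤ f x} :=
      closure_minimal hf (isClosed_le f.continuous continuous_const)
    rw [hv, sub_nonpos]
    exact hcl hw

end

theorem exists_nonneg_add_smul_mem_frontier {E : Type*} [NormedAddCommGroup E] [NormedSpace ℝ E]
    {L : Set E} (hL : Bornology.IsBounded L) {x v : E} (hx : x ∈ L) (hv : v ≠ 0) :
    ∃ t : ℝ, 0 ≤ t ∧ x + t • v ∈ frontier L := by
  have hline : ∀ t : ℝ, AffineMap.lineMap x (x + v) t = x + t • v := fun t => by
    simp [AffineMap.lineMap_apply, add_comm]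
  set S : Set ℝ := AffineMap.lineMap x (x + v) ⁻¹' L
  have h0 : (0 : ℝ) ∈ S := by simpa [S] using hx
  have hS : BddAbove S :=
    ((antilipschitzWith_lineMap (by simpa using hv)).isBounded_preimage hL).bddAbove
  have hsup : sSup S ∈ frontier S := by
    refine ⟨csSup_mem_closure ⟨0, h0⟩ hS, fun hint => ?_⟩
    have hS' : ∀ᶠ t in 𝓝[>] sSup S, t ∈ S :=
      nhdsWithin_le_nhds (mem_interior_iff_mem_nhds.mp hint)
    obtain ⟨t, htS, ht⟩ := (hS'.and self_mem_nhdsWithin).exists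
    exact (not_le.mpr ht) (le_csSup hS htS)
  refine ⟨sSup S, le_csSup hS h0, ?_⟩
  rw [← hline]
  exact AffineMap.lineMap_continuous.frontier_preimage_subset L hsup

theorem Convex.hausdorffMeasure_frontier_le_of_subset {E : Type*} [NormedAddCommGroup E]
    [InnerProductSpace ℝ E] [FiniteDimensional ℝ E] [MeasurableSpace E] [BorelSpace E]
    {A B : Set E} (hA : Convex ℝ A) (hB : Bornology.IsBounded B) (hAB : A ⊆ B) {s : ℝ}
    (hs : 0 ≤ s) : μH[s] (frontier A) ≤ μH[s] (frontier B) := by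
  rcases A.eq_empty_or_nonempty with rfl | hne
  · simp
  obtain ⟨π, hπ, hπ_eq⟩ :=
    hA.closure.exists_lipschitzWith_one_proj hne.closure isClosed_closure.isComplete
  have hsub : frontier A ⊆ π '' frontier B := by
    intro x hx
    have hxA := frontier_subset_closure hx
    obtain ⟨v, hv0, hv⟩ := hA.exists_ne_zero_inner_nonpos_of_mem_frontier hx
    obtain ⟨t, ht, htB⟩ :=
      exists_nonneg_add_smul_mem_frontier hB.closure (closure_mono hAB hxA) hv0
    refine ⟨x + t • v, frontier_closure_subset htB, hπ_eq _ x hxA fun w hw => ?_⟩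
    rw [add_sub_cancel_left, real_inner_smul_left]
    exact mul_nonpos_of_nonneg_of_nonpos ht (hv w hw)
  calc μH[s] (frontier A) ≤ μH[s] (π '' frontier B) := measure_mono hsub
    _ ≤ μH[s] (frontier B) := by simpa using hπ.hausdorffMeasure_image_le hs (frontier B)

theorem statement6_general
    {d : ℕ} (hd : 1 ≤ d) (A B : Set (EuclideanSpace ℝ (Fin d)))
    (hA : Convex ℝ A)
    (hBbdd : Bornology.IsBounded B)
    (hAB : A ⊆ B) :
    μH[(d : ℝ) - 1] (frontier A) ≤ μH[(d : ℝ) - 1] (frontier B) :=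
  hA.hausdorffMeasure_frontier_le_of_subset hBbdd hAB (sub_nonneg.mpr (by exact_mod_cast hd))

theorem statement6
    {d : ℕ} (hd : 1 ≤ d) (A B : Set (EuclideanSpace ℝ (Fin d)))
    (hA : Convex ℝ A) (hB : Convex ℝ B)
    (hAbdd : Bornology.IsBounded A) (hBbdd : Bornology.IsBounded B)
    (hAB : A ⊆ B) :
    μH[(d : ℝ) - 1] (frontier A) ≤ μH[(d : ℝ) - 1] (frontier B) :=
  statement6_general hd A B hA hBbdd hAB
end
end
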